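/- Let (τ_t) be a non-increasing sequence of nonnegative reals and Ψ_T = ∑_{k=1}^T τ_k. Then ∑_{t=1}^T τ_{t+1}/√(Ψ_{t+1}/(t+1)) ≤ √(T·Ψ_T). -/
import Mathlib


theorem stmt_3 (τ : ℕ → ℝ) (hτ : ∀ k, 0 ≤ τ k) (hmono : ∀ k, τ (k + 1) ≤ τ k) (T : ℕ) :
    ∑ t ∈ Finset.Icc 1 T,
        τ (t + 1) / Real.sqrt ((∑ k ∈ Finset.Icc 1 (t + 1), τ k) / ((t : ℝ) + 1)) ≤
      Real.sqrt ((T : ℝ) * ∑ k ∈ Finset.Icc 1 T, τ k) := by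
  have hanti : Antitone τ := antitone_nat_of_succ_le hmono
  have step : ∀ t ∈ Finset.Icc 1 T,
      τ (t + 1) / Real.sqrt ((∑ k ∈ Finset.Icc 1 (t + 1), τ k) / ((t : ℝ) + 1)) ≤
        Real.sqrt (τ t) := by
    intro t _
    rcases eq_or_lt_of_le (hτ (t + 1)) with h0 | hpos
    · rw [← h0]
      simp [Real.sqrt_nonneg]
    · have hΨ : ((t : ℝ) + 1) * τ (t + 1) ≤ ∑ k ∈ Finset.Icc 1 (t + 1), τ k := by
        calc ((t : ℝ) + 1) * τ (t + 1) = ∑ _k ∈ Finset.Icc 1 (t + 1), τ (t + 1) := by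
              rw [Finset.sum_const, Nat.card_Icc]; push_cast; ring
          _ ≤ _ := Finset.sum_le_sum fun k hk => hanti (Finset.mem_Icc.mp hk).2
      have ht1 : (0 : ℝ) < (t : ℝ) + 1 := by positivity
      have hdiv : τ (t + 1) ≤ (∑ k ∈ Finset.Icc 1 (t + 1), τ k) / ((t : ℝ) + 1) :=
        (le_div_iff₀ ht1).mpr (by linarith)
      have hspos : 0 < Real.sqrt (τ (t + 1)) := Real.sqrt_pos.mpr hpos
      calc τ (t + 1) / Real.sqrt ((∑ k ∈ Finset.Icc 1 (t + 1), τ k) / ((t : ℝ) + 1))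
          ≤ τ (t + 1) / Real.sqrt (τ (t + 1)) :=
            div_le_div_of_nonneg_left (le_of_lt hpos) hspos (Real.sqrt_le_sqrt hdiv)
        _ = Real.sqrt (τ (t + 1)) := Real.div_sqrt
        _ ≤ Real.sqrt (τ t) := Real.sqrt_le_sqrt (hmono t)
  refine le_trans (Finset.sum_le_sum step) ?_
  have hsum_nonneg : 0 ≤ ∑ t ∈ Finset.Icc 1 T, Real.sqrt (τ t) :=
    Finset.sum_nonneg fun t _ => Real.sqrt_nonneg _
  rw [Real.le_sqrt hsum_nonneg]
  calc (∑ t ∈ Finset.Icc 1 T, Real.sqrt (τ t)) ^ 2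
      ≤ (Finset.Icc 1 T).card * ∑ t ∈ Finset.Icc 1 T, Real.sqrt (τ t) ^ 2 :=
        sq_sum_le_card_mul_sum_sq
    _ = (T : ℝ) * ∑ k ∈ Finset.Icc 1 T, τ k := by
        rw [Nat.card_Icc, Finset.sum_congr rfl fun t _ => Real.sq_sqrt (hτ t)]
        push_cast; ring
  exact mul_nonneg (Nat.cast_nonneg T) (Finset.sum_nonneg fun k _ => hτ k)
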